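/- arXiv:1812.10673 — 3 statements merged into one kernel-verified Lean document; each statement's English description precedes it below -/
import Mathlib

section
/- Let V be a finite-dimensional complex vector space with dim V ≥ 3, let q be a nondegenerate quadratic form on V with polar form b, and let η, β ∈ V satisfy q(η) = q(β) = 0 and b(η, β) ≠ 0. Then there exists a triple (x, y, z) ∈ D°(q) such that y + i·z = η and y − i·z = β (where i = √−1 ∈ ℂ); moreover any such triple necessarily satisfies q(x) = q(y) = q(z) = b(η, β)/4. -/
/-- The subset `D°(q)` of triples `(x, y, z)` with `q x = q y = q z ≠ 0` and pairwise
vanishing polar pairings. -/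
def Dcirc {V : Type*} [AddCommGroup V] [Module ℂ V] (q : QuadraticForm ℂ V) :
    Set (V × V × V) :=
  {t | q t.1 = q t.2.1 ∧ q t.1 = q t.2.2 ∧
    QuadraticMap.polar (⇑q) t.1 t.2.1 = 0 ∧
    QuadraticMap.polar (⇑q) t.2.1 t.2.2 = 0 ∧
    QuadraticMap.polar (⇑q) t.2.2 t.1 = 0 ∧
    q t.1 ≠ 0}

open QuadraticMap Module Submodule

/-- Auxiliary: there is an anisotropic vector orthogonal to both `η` and `β`. -/
theorem exists_aniso {V : Type*} [AddCommGroup V] [Module ℂ V] [FiniteDimensional ℂ V]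
    (hdim : 3 ≤ Module.finrank ℂ V)
    (q : QuadraticForm ℂ V)
    (hq : (QuadraticMap.polarBilin q).Nondegenerate)
    (η β : V) (hη : q η = 0) (hβ : q β = 0)
    (hb : QuadraticMap.polar (⇑q) η β ≠ 0) :
    ∃ x : V, q x ≠ 0 ∧ QuadraticMap.polar (⇑q) η x = 0 ∧ QuadraticMap.polar (⇑q) β x = 0 := by
  classical
  set B : LinearMap.BilinForm ℂ V := q.polarBilin with hBdef
  have hBapp : ∀ u v : V, B u v = QuadraticMap.polar (⇑q) u v := fun u v => rfl
  have hrefl : B.IsRefl := by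
    intro u v h
    rw [hBapp] at h ⊢
    rwa [polar_comm]
  set W : Submodule ℂ V := Submodule.span ℂ {η, β} with hWdef
  set K := B.orthogonal W with hKdef
  have hηW : η ∈ W := Submodule.subset_span (by simp)
  have hβW : β ∈ W := Submodule.subset_span (by simp)
  have hWle : finrank ℂ W ≤ 2 := by
    refine (finrank_span_le_card ({η, β} : Set V)).trans ?_
    rw [Set.toFinset_insert, Set.toFinset_singleton]
    exact (Finset.card_insert_le _ _).trans (by simp)
  have hBηη : B η η = 0 := by
    rw [hBapp, polar_self, hη]; simp
  have hBββ : B β β = 0 := by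
    rw [hBapp, polar_self, hβ]; simp
  -- W and K intersect trivially
  have hWK : W ⊓ K = ⊥ := by
    rw [eq_bot_iff]
    rintro w ⟨hw1, hw2⟩
    obtain ⟨r, s, rfl⟩ := Submodule.mem_span_pair.mp hw1
    have h1 : B η (r • η + s • β) = 0 := hw2 η hηW
    have h2 : B β (r • η + s • β) = 0 := hw2 β hβW
    rw [map_add, LinearMap.map_smul, LinearMap.map_smul, hBηη, smul_eq_mul, smul_eq_mul, mul_zero, zero_add,
      hBapp] at h1
    have hs : s = 0 := by
      rcases mul_eq_zero.mp h1 with h | h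
      · exact h
      · exact absurd h hb
    rw [map_add, LinearMap.map_smul, LinearMap.map_smul, hBββ, smul_eq_mul, smul_eq_mul, mul_zero, add_zero,
      hBapp, polar_comm] at h2
    have hr : r = 0 := by
      rcases mul_eq_zero.mp h2 with h | h
      · exact h
      · exact absurd h hb
    simp [hr, hs]
  by_contra hcon
  push_neg at hcon
  -- so q vanishes on K, hence K is totally isotropic
  have hq0 : ∀ k ∈ K, q k = 0 := by
    intro k hk
    by_contra hne
    exact hcon k hne (hk η hηW)
      (hk β hβW)
  have hKiso : K ≤ B.orthogonal K := by
    intro k hk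
    intro k' hk'
    show B k' k = 0
    rw [hBapp, QuadraticMap.polar]
    rw [hq0 k hk, hq0 k' hk', hq0 _ (K.add_mem hk' hk)]
    ring
  have hWiso : W ≤ B.orthogonal K := by
    intro w hw k hk
    exact hrefl w k (hk w hw)
  have hsup : W ⊔ K ≤ B.orthogonal K := sup_le hWiso hKiso
  have hd1 : finrank ℂ K = finrank ℂ V - finrank ℂ W :=
    LinearMap.BilinForm.finrank_orthogonal (B := B) hq W
  have hd2 : finrank ℂ (B.orthogonal K) = finrank ℂ V - finrank ℂ K :=
    LinearMap.BilinForm.finrank_orthogonal (B := B) hq K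
  have hd3 : finrank ℂ (W ⊔ K : Submodule ℂ V) + finrank ℂ (W ⊓ K : Submodule ℂ V) =
      finrank ℂ W + finrank ℂ K := Submodule.finrank_sup_add_finrank_inf_eq W K
  rw [hWK] at hd3
  have hd4 : finrank ℂ (W ⊔ K : Submodule ℂ V) ≤ finrank ℂ (B.orthogonal K) :=
    Submodule.finrank_mono hsup
  have hWV : finrank ℂ W ≤ finrank ℂ V := Submodule.finrank_le W
  have hKV : finrank ℂ K ≤ finrank ℂ V := Submodule.finrank_le K
  rw [finrank_bot, add_zero] at hd3
  omega

/-- Given isotropic `η`, `β` with nonzero pairing in a nondegenerate complex quadratic space of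
dimension at least 3, there is a triple `(x, y, z) ∈ D°(q)` with `y + iz = η` and `y - iz = β`;
moreover any such triple satisfies `q x = q y = q z = b(η, β)/4`. -/
theorem stmt2 (V : Type*) [AddCommGroup V] [Module ℂ V] [FiniteDimensional ℂ V]
    (hdim : 3 ≤ Module.finrank ℂ V)
    (q : QuadraticForm ℂ V)
    (hq : (QuadraticMap.polarBilin q).Nondegenerate)
    (η β : V) (hη : q η = 0) (hβ : q β = 0)
    (hb : QuadraticMap.polar (⇑q) η β ≠ 0) :
    (∃ x y z : V, (x, y, z) ∈ Dcirc q ∧ y + Complex.I • z = η ∧ y - Complex.I • z = β) ∧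
    (∀ x y z : V, (x, y, z) ∈ Dcirc q → y + Complex.I • z = η → y - Complex.I • z = β →
      q x = QuadraticMap.polar (⇑q) η β / 4 ∧
      q y = QuadraticMap.polar (⇑q) η β / 4 ∧
      q z = QuadraticMap.polar (⇑q) η β / 4) := by
  constructor
  · -- existence
    obtain ⟨x₀, hx₀, hox1, hox2⟩ := exists_aniso hdim q hq η β hη hβ hb
    obtain ⟨c, hc⟩ := IsAlgClosed.exists_pow_nat_eq
      (QuadraticMap.polar (⇑q) η β / (4 * q x₀)) (n := 2) (by norm_num)
    set x : V := c • x₀ with hxdef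
    set y : V := (2⁻¹ : ℂ) • (η + β) with hydef
    set z : V := (Complex.I / 2) • (β - η) with hzdef
    have hqx : q x = QuadraticMap.polar (⇑q) η β / 4 := by
      rw [hxdef, QuadraticMap.map_smul, smul_eq_mul, ← pow_two, hc]
      field_simp
    have hqadd : q (η + β) = QuadraticMap.polar (⇑q) η β := by
      rw [QuadraticMap.polar, hη, hβ]; ring
    have hqy : q y = QuadraticMap.polar (⇑q) η β / 4 := by
      rw [hydef, QuadraticMap.map_smul, hqadd, smul_eq_mul]
      ring
    have hsub : q (β - η) = -(QuadraticMap.polar (⇑q) η β) := by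
      have h1 : QuadraticMap.polar (⇑q) β (-η) = q (β + -η) - q β - q (-η) := rfl
      rw [QuadraticMap.polar_neg_right, QuadraticMap.polar_comm (⇑q) β η,
        ← sub_eq_add_neg, QuadraticMap.map_neg, hη, hβ] at h1
      linear_combination -h1
    have hqz : q z = QuadraticMap.polar (⇑q) η β / 4 := by
      rw [hzdef, QuadraticMap.map_smul, hsub, smul_eq_mul]
      linear_combination (-(QuadraticMap.polar (⇑q) η β) / 4) * Complex.I_sq
    have hpxy : QuadraticMap.polar (⇑q) x y = 0 := by
      rw [hxdef, hydef, QuadraticMap.polar_smul_left, QuadraticMap.polar_smul_right,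
        QuadraticMap.polar_add_right, QuadraticMap.polar_comm (⇑q) x₀ η,
        QuadraticMap.polar_comm (⇑q) x₀ β, hox1, hox2]
      simp
    have hpyz : QuadraticMap.polar (⇑q) y z = 0 := by
      rw [hydef, hzdef, QuadraticMap.polar_smul_left, QuadraticMap.polar_smul_right,
        QuadraticMap.polar_add_left, QuadraticMap.polar_sub_right,
        QuadraticMap.polar_sub_right, QuadraticMap.polar_self, QuadraticMap.polar_self,
        QuadraticMap.polar_comm (⇑q) β η, hη, hβ]
      simp
    have hpzx : QuadraticMap.polar (⇑q) z x = 0 := by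
      rw [hzdef, hxdef, QuadraticMap.polar_smul_left, QuadraticMap.polar_smul_right,
        QuadraticMap.polar_sub_left, hox2, hox1]
      simp
    have hxne : q x ≠ 0 := by
      rw [hqx]
      exact div_ne_zero hb (by norm_num)
    have hIz : Complex.I • z = -(2⁻¹ : ℂ) • (β - η) := by
      rw [hzdef, smul_smul]
      congr 1
      rw [div_eq_mul_inv, ← mul_assoc, Complex.I_mul_I]
      ring
    refine ⟨x, y, z, ⟨?_, ?_, hpxy, hpyz, hpzx, hxne⟩, ?_, ?_⟩
    · rw [hqx, hqy]
    · rw [hqx, hqz]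
    · rw [hydef, hIz]; module
    · rw [hydef, hIz]; module
  · rintro x y z ⟨e1, e2, p1, p2, p3, hne⟩ h1 h2
    have e1' : q x = q y := e1
    have e2' : q x = q z := e2
    have p2' : QuadraticMap.polar (⇑q) y z = 0 := p2
    have p2'' : QuadraticMap.polar (⇑q) z y = 0 := by
      rw [QuadraticMap.polar_comm]; exact p2'
    have key : QuadraticMap.polar (⇑q) η β = 2 * q y + 2 * q z := by
      rw [← h1, ← h2]
      simp only [QuadraticMap.polar_add_left, QuadraticMap.polar_sub_right,
        QuadraticMap.polar_smul_left, QuadraticMap.polar_smul_right,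
        QuadraticMap.polar_self, p2', p2'', smul_eq_mul, nsmul_eq_mul]
      push_cast
      linear_combination (-2 * q z) * Complex.I_sq
    have key2 : QuadraticMap.polar (⇑q) η β = 4 * q x := by
      rw [key, ← e1', ← e2']; ring
    have hx4 : q x = QuadraticMap.polar (⇑q) η β / 4 := by
      rw [key2]; ring
    exact ⟨hx4, by rw [← e1']; exact hx4, by rw [← e2']; exact hx4⟩
end

section
/- Let r ≥ 0 be an integer. Let (H^d)_{d ≥ 0} be a family of finite-dimensional ℚ-vector spaces equipped with an increasing filtration P₀H^d ⊆ P₁H^d ⊆ ⋯ ⊆ H^d (with the convention P₋₁H^d = 0) satisfying P_d H^d = H^d for all d, and let β : H^d → H^{d+2} (for all d) be linear maps with β(P_k H^d) ⊆ P_k H^{d+2} for all k, d. Assume the hard Lefschetz condition: for every k ≥ 0 and every m with 0 ≤ m ≤ r, the map induced by β^{r−m} on graded pieces, Gr^P_k H^{k+m} → Gr^P_k H^{k+2r−m}, is injective (where Gr^P_k H^d = P_k H^d / P_{k−1} H^d). Then for every i ≥ 0, every j with 0 ≤ j ≤ r, and every v ∈ H^{i+j} with β^{r−j+1} v = 0,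 one has v ∈ P_i H^{i+j}. -/
/-!
Descending induction on the perversity: if `v ∈ P_{i+t} H^{i+j}` with `t ≥ 1`, then
`v ∈ H^{k+m}` for `k = i + t` and `m = j - t`, and `β^{r-m} v = 0` because `r - m ≥ r - j + 1`.
Hard Lefschetz on `Gr^P_k` says that the class of `v` there is zero, i.e. `v ∈ P_{i+t-1}`.
Starting from `P_{i+j} H^{i+j} = H^{i+j}`, after `j` steps we reach `P_i H^{i+j}`.
-/

section LefschetzDescent

variable {R W : Type*} [Semiring R] [AddCommMonoid W] [Module R W]
  {r : ℕ} {P : ℤ → ℕ → Submodule R W} {β : Module.End R W}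

theorem mem_pred_of_pow_apply_eq_zero
    (hHL : ∀ k m : ℕ, m ≤ r → ∀ v ∈ P (k : ℤ) (k + m),
      (β ^ (r - m)) v ∈ P ((k : ℤ) - 1) (k + 2 * r - m) → v ∈ P ((k : ℤ) - 1) (k + m))
    {k m : ℕ} (hm : m ≤ r) {v : W} (hv : v ∈ P k (k + m)) (hβv : (β ^ (r - m)) v = 0) :
    v ∈ P ((k : ℤ) - 1) (k + m) :=
  hHL k m hm v hv (hβv ▸ zero_mem _)

theorem mem_of_pow_apply_eq_zero
    (hHL : ∀ k m : ℕ, m ≤ r → ∀ v ∈ P (k : ℤ) (k + m),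
      (β ^ (r - m)) v ∈ P ((k : ℤ) - 1) (k + 2 * r - m) → v ∈ P ((k : ℤ) - 1) (k + m))
    {i j : ℕ} (hj : j ≤ r) {v : W} (hv : v ∈ P (i + j : ℕ) (i + j))
    (hβv : (β ^ (r - j + 1)) v = 0) : v ∈ P i (i + j) := by
  suffices h : ∀ t ≤ j, v ∈ P (i + t : ℕ) (i + j) by simpa using h 0 (Nat.zero_le j)
  intro t ht
  refine Nat.decreasingInduction (fun t htj ih => ?_) hv ht
  have hdeg : i + (t + 1) + (j - (t + 1)) = i + j := by omega
  have hβv' : (β ^ (r - (j - (t + 1)))) v = 0 :=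
    Module.End.pow_map_zero_of_le (by omega) hβv
  have h := mem_pred_of_pow_apply_eq_zero hHL (k := i + (t + 1)) (by omega) (hdeg ▸ ih) hβv'
  rwa [hdeg, show ((i + (t + 1) : ℕ) : ℤ) - 1 = (i + t : ℕ) by push_cast; ring] at h

end LefschetzDescent

theorem stmt5_general (r : ℕ) (W : Type*) [AddCommGroup W] [Module ℚ W]
    (Hgr : ℕ → Submodule ℚ W)
    (P : ℤ → ℕ → Submodule ℚ W)
    (htop : ∀ d : ℕ, P (d : ℤ) d = Hgr d)
    (β : Module.End ℚ W)
    (hHL : ∀ k m : ℕ, m ≤ r → ∀ v ∈ P (k : ℤ) (k + m),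
      (β ^ (r - m)) v ∈ P ((k : ℤ) - 1) (k + 2 * r - m) → v ∈ P ((k : ℤ) - 1) (k + m)) :
    ∀ i j : ℕ, j ≤ r → ∀ v ∈ Hgr (i + j),
      (β ^ (r - j + 1)) v = 0 → v ∈ P (i : ℤ) (i + j) := by
  intro i j hj v hv hβv
  exact mem_of_pow_apply_eq_zero hHL hj (htop (i + j) ▸ hv) hβv

/-- Abstract content of Proposition 1.2(a): in a graded vector space `Hgr` with an increasing
filtration `P` (with `P k = ⊥` for `k < 0` and `P d H^d = H^d`), and an operator `β` of degree `2`
preserving `P` and satisfying hard Lefschetz on the graded pieces, any class `v ∈ H^{i+j}` with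
`β^{r-j+1} v = 0` lies in `P_i H^{i+j}`. -/
theorem stmt5 (r : ℕ) (W : Type*) [AddCommGroup W] [Module ℚ W]
    (Hgr : ℕ → Submodule ℚ W)
    (hfin : ∀ d, FiniteDimensional ℚ (Hgr d))
    (P : ℤ → ℕ → Submodule ℚ W)
    (hPH : ∀ k d, P k d ≤ Hgr d)
    (hmono : ∀ k k' : ℤ, ∀ d, k ≤ k' → P k d ≤ P k' d)
    (hneg : ∀ k : ℤ, ∀ d, k < 0 → P k d = ⊥)
    (htop : ∀ d : ℕ, P (d : ℤ) d = Hgr d)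
    (β : Module.End ℚ W)
    (hβH : ∀ d, (Hgr d).map β ≤ Hgr (d + 2))
    (hβP : ∀ (k : ℤ) (d : ℕ), (P k d).map β ≤ P k (d + 2))
    (hHL : ∀ k m : ℕ, m ≤ r → ∀ v ∈ P (k : ℤ) (k + m),
      (β ^ (r - m)) v ∈ P ((k : ℤ) - 1) (k + 2 * r - m) → v ∈ P ((k : ℤ) - 1) (k + m)) :
    ∀ i j : ℕ, j ≤ r → ∀ v ∈ Hgr (i + j),
      (β ^ (r - j + 1)) v = 0 → v ∈ P (i : ℤ) (i + j) :=
  stmt5_general r W Hgr P htop β hHL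
end

section
/- Let r ≥ 0 be an integer, let (H^d)_{d ≥ 0} be a family of finite-dimensional ℚ-vector spaces, and let η, β : H^d → H^{d+2} (for all d) be linear maps with η∘β = β∘η. Suppose given: (1) subspaces Q^{i,a;d} ⊆ H^d for 0 ≤ i ≤ r, 0 ≤ a ≤ r−i, d ≥ 0, such that H^d = ⊕_{i,a} Q^{i,a;d}; define P_k H^d = ⊕_{i+2a ≤ k} Q^{i,a;d}; (2) η(Q^{i,a;d}) = Q^{i,a+1;d+2} whenever 0 ≤ a < r−i; (3) for all k, d: if v ∈ P_k H^d and η^{r−k+1} v = 0, then v ∈ Q^{k,0;d}; (4) β(P_k H^d) ⊆ P_k H^{d+2} for all k, d; (5) subspaces V^{i,j} ⊆ P_i H^{i+j} for 0 ≤ i, j ≤ r with η^{r−i+1} V^{i,j} = 0 and β^{r−j+1} V^{i,j} = 0, such that for every d one has the internal direct sum decomposition H^d = ⊕ η^a β^b V^{i,j}, the sum ranging over 0 ≤ a ≤ r−i, 0 ≤ b ≤ r−j, 2a + 2b + i + j = d. Then for all k, d: P_k H^d = ⊕ η^a β^b V^{i,j}, the sum ranging over the same indices with the additional constraint 2a +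 i ≤ k. -/
/-!
Each piece `η^a β^b V^{i,j}` of degree `d` lies in `Q^{i,a;d}`: `β^b V^{i,j}` stays in `P_i` and
is killed by `η^{r-i+1}`, so it lies in `Q^{i,0}` by (3), and `η^a` carries `Q^{i,0}` into
`Q^{i,a}` by (2). Both families decompose `H^d` and the `Q^{i,a;d}` are independent, so by the
modular law `Q^{i,a;d}` is exactly the sum of the pieces with indices `(i,a)`; summing over
`i + 2a ≤ k` gives the splitting of `P_k H^d`.
-/

/-- The filtration `P_k H^d = ⊕_{i + 2a ≤ k} Q^{i,a;d}` defined from a Deligne-type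
splitting `Q`. -/
def Pfil {W : Type*} [AddCommGroup W] [Module ℚ W]
    (Q : ℕ → ℕ → ℕ → Submodule ℚ W) (k d : ℕ) : Submodule ℚ W :=
  ⨆ (i : ℕ) (a : ℕ) (_ : i + 2 * a ≤ k), Q i a d

theorem iSupIndep.eq_of_le_of_iSup_le {α ι : Type*} [CompleteLattice α] [IsModularLattice α]
    {f g : ι → α} (hf : iSupIndep f) (hgf : ∀ i, g i ≤ f i) (hsup : ⨆ i, f i ≤ ⨆ i, g i) :
    f = g := by
  funext i
  have hsplit : ⨆ j, g j ≤ g i ⊔ ⨆ (j) (_ : j ≠ i), f j := iSup_le fun j => by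
    rcases eq_or_ne j i with rfl | hj
    · exact le_sup_left
    · exact le_sup_of_le_right (le_iSup₂_of_le j hj (hgf j))
  calc f i = (g i ⊔ ⨆ (j) (_ : j ≠ i), f j) ⊓ f i :=
        (inf_eq_right.2 ((le_iSup f i).trans (hsup.trans hsplit))).symm
    _ = g i := by rw [sup_inf_assoc_of_le _ (hgf i), (hf i).symm.eq_bot, sup_bot_eq]

theorem Submodule.map_pow_le_of_map_le {R M : Type*} [Semiring R] [AddCommMonoid M]
    [Module R M] {F : ℕ → Submodule R M} {f : Module.End R M} {m : ℕ}
    (h : ∀ n < m, (F n).map f ≤ F (n + 1)) : ∀ n ≤ m, (F 0).map (f ^ n) ≤ F n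
  | 0, _ => by rw [pow_zero, Module.End.one_eq_id, Submodule.map_id]
  | n + 1, hn => by
    rw [pow_succ', Module.End.mul_eq_comp, Submodule.map_comp]
    exact (Submodule.map_mono (map_pow_le_of_map_le h n (by omega))).trans (h n hn)

section

variable {W : Type*} [AddCommGroup W] [Module ℚ W] {r : ℕ} {η β : Module.End ℚ W}
  {Q : ℕ → ℕ → ℕ → Submodule ℚ W} {V : ℕ → ℕ → Submodule ℚ W}

theorem map_pow_Pfil_le (h4 : ∀ k d, (Pfil Q k d).map β ≤ Pfil Q k (d + 2)) (k d n : ℕ) :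
    (Pfil Q k d).map (β ^ n) ≤ Pfil Q k (d + 2 * n) :=
  Submodule.map_pow_le_of_map_le (F := fun n => Pfil Q k (d + 2 * n)) (m := n)
    (fun n _ => by simpa only [mul_add, ← add_assoc] using h4 k (d + 2 * n)) n le_rfl

theorem map_pow_Q_le (h2 : ∀ i a d, i ≤ r → a < r - i → (Q i a d).map η = Q i (a + 1) (d + 2))
    {i a : ℕ} (hi : i ≤ r) (ha : a ≤ r - i) (d : ℕ) :
    (Q i 0 d).map (η ^ a) ≤ Q i a (d + 2 * a) :=
  Submodule.map_pow_le_of_map_le (F := fun a => Q i a (d + 2 * a)) (m := r - i)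
    (fun a ha => by simpa only [mul_add, ← add_assoc] using (h2 i a (d + 2 * a) hi ha).le) a ha

theorem map_pow_mul_pow_le_Q (hcomm : Commute η β)
    (h2 : ∀ i a d, i ≤ r → a < r - i → (Q i a d).map η = Q i (a + 1) (d + 2))
    (h3 : ∀ k d, k ≤ r → ∀ v ∈ Pfil Q k d, (η ^ (r - k + 1)) v = 0 → v ∈ Q k 0 d)
    (h4 : ∀ k d, (Pfil Q k d).map β ≤ Pfil Q k (d + 2))
    (hVP : ∀ i j, i ≤ r → j ≤ r → V i j ≤ Pfil Q i (i + j))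
    (hVη : ∀ i j, i ≤ r → j ≤ r → ∀ v ∈ V i j, (η ^ (r - i + 1)) v = 0)
    ⦃i j a b d : ℕ⦄ (hi : i ≤ r) (hj : j ≤ r) (ha : a ≤ r - i)
    (hd : 2 * a + 2 * b + i + j = d) :
    (V i j).map (η ^ a * β ^ b) ≤ Q i a d := by
  have hprim : (V i j).map (β ^ b) ≤ Q i 0 (i + j + 2 * b) := by
    rintro _ ⟨v, hv, rfl⟩
    refine h3 i _ hi _ (map_pow_Pfil_le h4 i (i + j) b ⟨v, hVP i j hi hj hv, rfl⟩) ?_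
    rw [← Module.End.mul_apply, (hcomm.pow_pow _ _).eq, Module.End.mul_apply,
      hVη i j hi hj v hv, map_zero]
  calc (V i j).map (η ^ a * β ^ b) = ((V i j).map (β ^ b)).map (η ^ a) := by
        rw [Module.End.mul_eq_comp, Submodule.map_comp]
    _ ≤ (Q i 0 (i + j + 2 * b)).map (η ^ a) := Submodule.map_mono hprim
    _ ≤ Q i a (i + j + 2 * b + 2 * a) := map_pow_Q_le h2 hi ha _
    _ = Q i a d := by rw [← hd]; ring_nf

end

theorem stmt6_general (r : ℕ) (W : Type*) [AddCommGroup W] [Module ℚ W]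
    (Hgr : ℕ → Submodule ℚ W)
    (η β : Module.End ℚ W)
    (hcomm : η * β = β * η)
    (Q : ℕ → ℕ → ℕ → Submodule ℚ W)
    (hQsum : ∀ d, Hgr d = ⨆ p : ℕ × ℕ, Q p.1 p.2 d)
    (hQind : ∀ d, iSupIndep fun p : ℕ × ℕ => Q p.1 p.2 d)
    (h2 : ∀ i a d, i ≤ r → a < r - i → (Q i a d).map η = Q i (a + 1) (d + 2))
    (h3 : ∀ k d, k ≤ r → ∀ v ∈ Pfil Q k d, (η ^ (r - k + 1)) v = 0 → v ∈ Q k 0 d)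
    (h4 : ∀ k d, (Pfil Q k d).map β ≤ Pfil Q k (d + 2))
    (V : ℕ → ℕ → Submodule ℚ W)
    (hVP : ∀ i j, i ≤ r → j ≤ r → V i j ≤ Pfil Q i (i + j))
    (hVη : ∀ i j, i ≤ r → j ≤ r → ∀ v ∈ V i j, (η ^ (r - i + 1)) v = 0)
    (hVsum : ∀ d, Hgr d = ⨆ (i : ℕ) (j : ℕ) (a : ℕ) (b : ℕ)
      (_ : i ≤ r) (_ : j ≤ r) (_ : a ≤ r - i) (_ : b ≤ r - j)
      (_ : 2 * a + 2 * b + i + j = d), (V i j).map (η ^ a * β ^ b)) :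
    ∀ k d : ℕ, Pfil Q k d = ⨆ (i : ℕ) (j : ℕ) (a : ℕ) (b : ℕ)
      (_ : i ≤ r) (_ : j ≤ r) (_ : a ≤ r - i) (_ : b ≤ r - j)
      (_ : 2 * a + 2 * b + i + j = d) (_ : 2 * a + i ≤ k),
      (V i j).map (η ^ a * β ^ b) := by
  intro k d
  have hVQ := map_pow_mul_pow_le_Q hcomm h2 h3 h4 hVP hVη
  set S : ℕ × ℕ → Submodule ℚ W := fun p => ⨆ (j : ℕ) (b : ℕ) (_ : p.1 ≤ r) (_ : j ≤ r)
    (_ : p.2 ≤ r - p.1) (_ : b ≤ r - j) (_ : 2 * p.2 + 2 * b + p.1 + j = d),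
    (V p.1 j).map (η ^ p.2 * β ^ b)
  have hQS : (fun p : ℕ × ℕ => Q p.1 p.2 d) = S := by
    refine (hQind d).eq_of_le_of_iSup_le (fun p => ?_) ?_
    · simp only [S, iSup_le_iff]
      exact fun j b hi hj ha _ hd => hVQ hi hj ha hd
    · rw [← hQsum d, hVsum d]
      simp only [iSup_le_iff]
      exact fun i j a b hi hj ha hb hd => le_iSup_of_le (i, a) <| le_iSup₂_of_le j b <|
        le_iSup₂_of_le hi hj <| le_iSup₂_of_le ha hb <| le_iSup_of_le hd le_rfl
  apply le_antisymm
  · simp only [Pfil, iSup_le_iff]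
    intro i a hk
    rw [congrFun hQS (i, a)]
    simp only [S, iSup_le_iff]
    exact fun j b hi hj ha hb hd => le_iSup₂_of_le i j <| le_iSup₂_of_le a b <|
      le_iSup₂_of_le hi hj <| le_iSup₂_of_le ha hb <| le_iSup₂_of_le hd (by omega) le_rfl
  · simp only [iSup_le_iff]
    exact fun i j a b hi hj ha _ hd hk =>
      (hVQ hi hj ha hd).trans (le_iSup₂_of_le i a (le_iSup_of_le (by omega) le_rfl))

/-- Abstract content of Proposition 1.2(b): given Deligne's splitting `Q^{i,a;d}` of the
filtration `P` associated with `η` (with its characterizing properties (1)-(3)), if `β`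
preserves `P` and the subspaces `V^{i,j} ⊆ P_i H^{i+j}` give a primitive decomposition
`H^d = ⊕ η^a β^b V^{i,j}`, then this decomposition splits the filtration:
`P_k H^d = ⊕_{2a + i ≤ k} η^a β^b V^{i,j}`. -/
theorem stmt6 (r : ℕ) (W : Type*) [AddCommGroup W] [Module ℚ W]
    (Hgr : ℕ → Submodule ℚ W)
    (hfin : ∀ d, FiniteDimensional ℚ (Hgr d))
    (η β : Module.End ℚ W)
    (hcomm : η * β = β * η)
    (hηH : ∀ d, (Hgr d).map η ≤ Hgr (d + 2))
    (hβH : ∀ d, (Hgr d).map β ≤ Hgr (d + 2))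
    (Q : ℕ → ℕ → ℕ → Submodule ℚ W)
    (hQle : ∀ i a d, Q i a d ≤ Hgr d)
    (hQzero : ∀ i a d, ¬(i ≤ r ∧ a ≤ r - i) → Q i a d = ⊥)
    (hQsum : ∀ d, Hgr d = ⨆ p : ℕ × ℕ, Q p.1 p.2 d)
    (hQind : ∀ d, iSupIndep fun p : ℕ × ℕ => Q p.1 p.2 d)
    (h2 : ∀ i a d, i ≤ r → a < r - i → (Q i a d).map η = Q i (a + 1) (d + 2))
    (h3 : ∀ k d, k ≤ r → ∀ v ∈ Pfil Q k d, (η ^ (r - k + 1)) v = 0 → v ∈ Q k 0 d)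
    (h4 : ∀ k d, (Pfil Q k d).map β ≤ Pfil Q k (d + 2))
    (V : ℕ → ℕ → Submodule ℚ W)
    (hVP : ∀ i j, i ≤ r → j ≤ r → V i j ≤ Pfil Q i (i + j))
    (hVη : ∀ i j, i ≤ r → j ≤ r → ∀ v ∈ V i j, (η ^ (r - i + 1)) v = 0)
    (hVβ : ∀ i j, i ≤ r → j ≤ r → ∀ v ∈ V i j, (β ^ (r - j + 1)) v = 0)
    (hVsum : ∀ d, Hgr d = ⨆ (i : ℕ) (j : ℕ) (a : ℕ) (b : ℕ)
      (_ : i ≤ r) (_ : j ≤ r) (_ : a ≤ r - i) (_ : b ≤ r - j)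
      (_ : 2 * a + 2 * b + i + j = d), (V i j).map (η ^ a * β ^ b))
    (hVind : iSupIndep fun t : ℕ × ℕ × ℕ × ℕ =>
      if t.1 ≤ r ∧ t.2.1 ≤ r ∧ t.2.2.1 ≤ r - t.1 ∧ t.2.2.2 ≤ r - t.2.1
      then (V t.1 t.2.1).map (η ^ t.2.2.1 * β ^ t.2.2.2) else ⊥) :
    ∀ k d : ℕ, Pfil Q k d = ⨆ (i : ℕ) (j : ℕ) (a : ℕ) (b : ℕ)
      (_ : i ≤ r) (_ : j ≤ r) (_ : a ≤ r - i) (_ : b ≤ r - j)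
      (_ : 2 * a + 2 * b + i + j = d) (_ : 2 * a + i ≤ k),
      (V i j).map (η ^ a * β ^ b) :=
  stmt6_general r W Hgr η β hcomm Q hQsum hQind h2 h3 h4 V hVP hVη hVsum
end
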